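/- arXiv:math/0204136 — 7 statements merged into one kernel-verified Lean document; each statement's English description precedes it below -/
import Mathlib

section
/- A function f : (X,𝒯) → (Y,𝒱) between topological spaces is θ-continuous if and only if f(cl_θ(A)) ⊆ cl_θ(f(A)) for every A ⊆ X. -/
/-!
The forward direction pushes a witness in `closure U ∩ A` forward along `f`. Conversely, if
θ-continuity fails at `x` for an open `V ∋ f x`, then every `f '' closure U` leaves
`closure V`, so `x` lies in the θ-closure of `A := f ⁻¹' (closure V)ᶜ`; but no point of the
open set `V` lies in the θ-closure of `(closure V)ᶜ ⊇ f '' A`.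
-/

open Set

/-- The θ-closure of a set `A` in a topological space: the set of points `x` such that
`closure U` meets `A` for every open neighbourhood `U` of `x`. -/
def thetaCl {X : Type*} [TopologicalSpace X] (A : Set X) : Set X :=
  {x | ∀ U : Set X, IsOpen U → x ∈ U → (closure U ∩ A).Nonempty}

/-- A function between topological spaces is θ-continuous if for every point `x` and every
open neighbourhood `V` of `f x` there is an open neighbourhood `U` of `x` with
`f '' closure U ⊆ closure V`. -/
def ThetaContinuous {X Y : Type*} [TopologicalSpace X] [TopologicalSpace Y] (f : X → Y) : Prop :=
  ∀ x : X, ∀ V : Set Y, IsOpen V → f x ∈ V →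
    ∃ U : Set X, IsOpen U ∧ x ∈ U ∧ f '' closure U ⊆ closure V

section

variable {X Y : Type*} [TopologicalSpace X]

theorem thetaCl_mono {A B : Set X} (h : A ⊆ B) : thetaCl A ⊆ thetaCl B :=
  fun _ hx U hU hxU => (hx U hU hxU).mono (inter_subset_inter_right _ h)

theorem notMem_thetaCl_compl_closure {V : Set X} (hV : IsOpen V) {y : X} (hy : y ∈ V) :
    y ∉ thetaCl (closure V)ᶜ :=
  fun h => (h V hV hy).ne_empty (inter_compl_self _)

theorem mem_thetaCl_preimage_compl {f : X → Y} {x : X} {W : Set Y}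
    (h : ∀ U : Set X, IsOpen U → x ∈ U → ¬f '' closure U ⊆ W) :
    x ∈ thetaCl (f ⁻¹' Wᶜ) := by
  intro U hU hxU
  obtain ⟨_, ⟨a, haU, rfl⟩, ha⟩ := not_subset.1 (h U hU hxU)
  exact ⟨a, haU, ha⟩

theorem ThetaContinuous.image_thetaCl_subset [TopologicalSpace Y] {f : X → Y}
    (hf : ThetaContinuous f) (A : Set X) : f '' thetaCl A ⊆ thetaCl (f '' A) := by
  rintro _ ⟨x, hx, rfl⟩ V hV hfx
  obtain ⟨U, hU, hxU, hUV⟩ := hf x V hV hfx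
  obtain ⟨a, haU, haA⟩ := hx U hU hxU
  exact ⟨f a, hUV (mem_image_of_mem f haU), mem_image_of_mem f haA⟩

end

/-- A function between topological spaces is θ-continuous iff
`f '' thetaCl A ⊆ thetaCl (f '' A)` for every `A ⊆ X`. -/
theorem thetaContinuous_iff_image_thetaCl_subset {X Y : Type*} [TopologicalSpace X]
    [TopologicalSpace Y] (f : X → Y) :
    ThetaContinuous f ↔ ∀ A : Set X, f '' thetaCl A ⊆ thetaCl (f '' A) := by
  refine ⟨ThetaContinuous.image_thetaCl_subset, fun h x V hV hfx => ?_⟩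
  by_contra! hfail
  have hx : x ∈ thetaCl (f ⁻¹' (closure V)ᶜ) := mem_thetaCl_preimage_compl hfail
  exact notMem_thetaCl_compl_closure hV hfx
    (thetaCl_mono (image_preimage_subset f _) (h _ (mem_image_of_mem f hx)))
end

section
/- Let X, Y, Z be topological spaces. A function g : Z × X → Y is θ-continuous (with respect to the product topology on Z × X) if and only if g is a continuous map from the product closure space (Z,cl_θ) × (X,cl_θ) to the closure space (Y,cl_θ), i.e., for every S ⊆ Z × X and every (z,x) with the property that (W × U) ∩ S ≠ ∅ whenever W is the closure of an open neighbourhood of z and U is the closure of an open neighbourhood of x, one has g(z,x) ∈ cl_θ(g(S)), and conversely this closure-space continuity implies θ-continuity of g. -/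
open Set

/-!
θ-continuity is exactly the requirement `f '' thetaCl S ⊆ thetaCl (f '' S)` for all `S`
(for the converse, take `S = f ⁻¹' (closure V)ᶜ`). In a product, the θ-closure may be tested
on open boxes, since `closure (W ×ˢ U) = closure W ×ˢ closure U`; so the θ-closure space of
`Z × X` is the product of the θ-closure spaces of `Z` and `X`.
-/

section ThetaClosure

variable {X Y Z : Type*} [TopologicalSpace X] [TopologicalSpace Y] [TopologicalSpace Z]

theorem thetaContinuous_iff_mapsTo_thetaCl {f : X → Y} :
    ThetaContinuous f ↔ ∀ S : Set X, MapsTo f (thetaCl S) (thetaCl (f '' S)) := by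
  constructor
  · intro hf S x hx V hV hfxV
    obtain ⟨U, hU, hxU, hfU⟩ := hf x V hV hfxV
    obtain ⟨p, hpU, hpS⟩ := hx U hU hxU
    exact ⟨f p, hfU (mem_image_of_mem f hpU), mem_image_of_mem f hpS⟩
  · intro hf x V hV hfxV
    by_contra! hfar
    -- `x` is θ-adherent to the set of points that `f` sends outside `closure V`.
    have hx : x ∈ thetaCl (f ⁻¹' (closure V)ᶜ) := by
      intro U hU hxU
      obtain ⟨_, ⟨p, hpU, rfl⟩, hpV⟩ := not_subset.mp (hfar U hU hxU)
      exact ⟨p, hpU, hpV⟩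
    obtain ⟨_, hV', p, hpV, rfl⟩ := hf _ hx V hV hfxV
    exact hpV hV'

theorem mk_mem_thetaCl_prod_iff {S : Set (Z × X)} {z : Z} {x : X} :
    (z, x) ∈ thetaCl S ↔ ∀ (W : Set Z) (U : Set X), IsOpen W → z ∈ W → IsOpen U → x ∈ U →
      ((closure W ×ˢ closure U) ∩ S).Nonempty := by
  constructor
  · intro h W U hW hzW hU hxU
    simpa only [closure_prod_eq] using h (W ×ˢ U) (hW.prod hU) ⟨hzW, hxU⟩
  · intro h O hO hzxO
    obtain ⟨W, U, hW, hU, hzW, hxU, hWU⟩ := isOpen_prod_iff.mp hO z x hzxO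
    obtain ⟨p, hpWU, hpS⟩ := h W U hW hzW hU hxU
    rw [← closure_prod_eq] at hpWU
    exact ⟨p, closure_mono hWU hpWU, hpS⟩

end ThetaClosure

/-- A function `g : Z × X → Y` is θ-continuous (for the product topology) iff it is a
continuous map from the product of the θ-closure spaces of `Z` and `X` to the θ-closure
space of `Y`: for every `S ⊆ Z × X` and every point `(z, x)` such that
`(closure W ×ˢ closure U) ∩ S ≠ ∅` for all open neighbourhoods `W` of `z` and `U` of `x`,
one has `g (z, x) ∈ thetaCl (g '' S)`. -/
theorem thetaContinuous_prod_iff_closureSpace_continuous {X Y Z : Type*} [TopologicalSpace X]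
    [TopologicalSpace Y] [TopologicalSpace Z] (g : Z × X → Y) :
    ThetaContinuous g ↔
      ∀ (S : Set (Z × X)) (z : Z) (x : X),
        (∀ (W : Set Z) (U : Set X), IsOpen W → z ∈ W → IsOpen U → x ∈ U →
          ((closure W ×ˢ closure U) ∩ S).Nonempty) →
        g (z, x) ∈ thetaCl (g '' S) := by
  simp only [thetaContinuous_iff_mapsTo_thetaCl, MapsTo, Prod.forall, mk_mem_thetaCl_prod_iff]
end

section
/- Let (X,u) and (Y,v) be closure spaces and let σ be a Čech closure operator on Y^X. Then σ is admissible if and only if the evaluation mapping ε : (Y^X,σ) × (X,u) → (Y,v), ε(f,x) = f(x), is continuous (with respect to the product closure on Y^X × X). -/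
open Set

universe u

/-- A Čech closure operator on a type `X`: it satisfies (C1) `cl ∅ = ∅`,
(C2) `A ⊆ cl A` and (C3) `cl (A ∪ B) = cl A ∪ cl B`.  The pair `(X, u)` is a
(Čech) closure space. -/
structure CechClosure (X : Type u) : Type u where
  cl : Set X → Set X
  cl_empty : cl ∅ = ∅
  subset_cl : ∀ A : Set X, A ⊆ cl A
  cl_union : ∀ A B : Set X, cl (A ∪ B) = cl A ∪ cl B

namespace CechClosure

variable {X Y Z : Type u}

/-- The interior operator of a closure space: `int_u A = X \ u (X \ A)`. -/
def interior (u : CechClosure X) (A : Set X) : Set X := (u.cl Aᶜ)ᶜ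

/-- `U` is a neighbourhood of `x` in `(X, u)` if `x ∈ int_u U`. -/
def Nhd (u : CechClosure X) (x : X) (U : Set X) : Prop := x ∈ u.interior U

theorem interior_subset (u : CechClosure X) (A : Set X) : u.interior A ⊆ A := by
  intro x hx
  by_contra h
  exact hx (u.subset_cl _ h)

theorem interior_inter (u : CechClosure X) (A B : Set X) :
    u.interior (A ∩ B) = u.interior A ∩ u.interior B := by
  unfold interior
  rw [compl_inter, u.cl_union, compl_union]

theorem nhd_univ (u : CechClosure X) (x : X) : u.Nhd x univ := by
  simp [Nhd, interior, u.cl_empty]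

theorem nhd_inter (u : CechClosure X) {x : X} {A B : Set X} (hA : u.Nhd x A)
    (hB : u.Nhd x B) : u.Nhd x (A ∩ B) := by
  have h := u.interior_inter A B
  unfold Nhd at *
  rw [h]
  exact ⟨hA, hB⟩

/-- A function `f : (X, u) → (Y, v)` between closure spaces is continuous if
`f (u A) ⊆ v (f A)` for every `A ⊆ X`. -/
def Continuous (u : CechClosure X) (v : CechClosure Y) (f : X → Y) : Prop :=
  ∀ A : Set X, f '' u.cl A ⊆ v.cl (f '' A)

/-- The product of two closure spaces: `(z, x)` is in the closure of `S` iff every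
"rectangle" `W ×ˢ U` of neighbourhoods `W` of `z` and `U` of `x` meets `S`. -/
def prod (w : CechClosure Z) (u : CechClosure X) : CechClosure (Z × X) where
  cl S := {p | ∀ W U, w.Nhd p.1 W → u.Nhd p.2 U → (W ×ˢ U ∩ S).Nonempty}
  cl_empty := by
    ext p
    simp only [mem_setOf_eq, mem_empty_iff_false, iff_false]
    intro h
    rcases h univ univ (w.nhd_univ _) (u.nhd_univ _) with ⟨q, -, hq⟩
    exact hq
  subset_cl := by
    intro S p hp W U hW hU
    exact ⟨p, ⟨⟨w.interior_subset _ hW, u.interior_subset _ hU⟩, hp⟩⟩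
  cl_union := by
    intro S T
    ext p
    simp only [mem_setOf_eq, mem_union]
    constructor
    · intro h
      by_contra hc
      push_neg at hc
      obtain ⟨h1, h2⟩ := hc
      simp only [← Set.not_nonempty_iff_eq_empty] at h1 h2
      obtain ⟨W1, U1, hW1, hU1, hne1⟩ := h1
      obtain ⟨W2, U2, hW2, hU2, hne2⟩ := h2
      rcases h (W1 ∩ W2) (U1 ∩ U2) (w.nhd_inter hW1 hW2) (u.nhd_inter hU1 hU2) with
        ⟨q, ⟨⟨hq1, hq2⟩, hqST⟩⟩
      rcases hqST with hqS | hqT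
      · exact hne1 ⟨q, ⟨⟨hq1.1, hq2.1⟩, hqS⟩⟩
      · exact hne2 ⟨q, ⟨⟨hq1.2, hq2.2⟩, hqT⟩⟩
    · rintro (h | h) W U hW hU
      · rcases h W U hW hU with ⟨q, hq1, hq2⟩
        exact ⟨q, hq1, Or.inl hq2⟩
      · rcases h W U hW hU with ⟨q, hq1, hq2⟩
        exact ⟨q, hq1, Or.inr hq2⟩

/-- `Y^X`: the type of continuous functions between the closure spaces
`(X, u)` and `(Y, v)`. -/
def ContMap (u : CechClosure X) (v : CechClosure Y) : Type u :=
  {f : X → Y // Continuous u v f}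

/-- A closure operator `σ` on `Y^X` is proper (splitting) if for every closure space
`(Z, w)`, continuity of `g : (Z, w) × (X, u) → (Y, v)` implies continuity of
`g* : (Z, w) → (Y^X, σ)`, where `g (z, x) = (g* z) x`. -/
def Proper (u : CechClosure X) (v : CechClosure Y) (σ : CechClosure (ContMap u v)) : Prop :=
  ∀ (Z : Type u) (w : CechClosure Z) (G : Z → ContMap u v),
    Continuous (w.prod u) v (fun p => (G p.1).1 p.2) → Continuous w σ G

/-- A closure operator `σ` on `Y^X` is admissible (jointly continuous) if for every closure
space `(Z, w)`, continuity of `g* : (Z, w) → (Y^X, σ)` implies continuity of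
`g : (Z, w) × (X, u) → (Y, v)`, where `g (z, x) = (g* z) x`. -/
def Admissible (u : CechClosure X) (v : CechClosure Y) (σ : CechClosure (ContMap u v)) : Prop :=
  ∀ (Z : Type u) (w : CechClosure Z) (G : Z → ContMap u v),
    Continuous w σ G → Continuous (w.prod u) v (fun p => (G p.1).1 p.2)

/-- A topological space regarded as a closure space via its (Kuratowski) closure operator. -/
def ofTop {Z : Type u} (t : TopologicalSpace Z) : CechClosure Z :=
  letI := t
  { cl := fun A => _root_.closure A
    cl_empty := closure_empty
    subset_cl := fun _ => subset_closure
    cl_union := fun _ _ => closure_union }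

/-- `le` is the order relation of a directed set: a reflexive and transitive relation on a
nonempty type in which every two elements have an upper bound. -/
structure IsDirectedOrder {Λ : Type*} (le : Λ → Λ → Prop) : Prop where
  refl : ∀ a, le a a
  trans : ∀ a b c, le a b → le b c → le a c
  directed : ∀ a b, ∃ c, le a c ∧ le b c
  nonempty : Nonempty Λ

/-- Convergence of a net `s : Λ → X` (with order `le` on `Λ`) to a point `x` in a closure
space `(X, u)`: every neighbourhood of `x` contains `s l` residually. -/
def NetConv (u : CechClosure X) {Λ : Type*} (le : Λ → Λ → Prop) (s : Λ → X) (x : X) : Prop :=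
  ∀ U : Set X, u.Nhd x U → ∃ l₀, ∀ l, le l₀ l → s l ∈ U

/-- The product order on `Λ × M`. -/
def prodLE {Λ M : Type*} (leΛ : Λ → Λ → Prop) (leM : M → M → Prop) :
    Λ × M → Λ × M → Prop :=
  fun p q => leΛ p.1 q.1 ∧ leM p.2 q.2

/-- A net `F : Λ → Y^X` converges continuously to `f ∈ Y^X` if for every `x ∈ X` and every
net `s : M → X` converging to `x` in `(X, u)`, the net `(l, m) ↦ (F l) (s m)` (indexed by
`Λ × M` with the product order) converges to `f x` in `(Y, v)`. -/
def ContConv (u : CechClosure X) (v : CechClosure Y) {Λ : Type u} (leΛ : Λ → Λ → Prop)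
    (F : Λ → ContMap u v) (f : ContMap u v) : Prop :=
  ∀ (M : Type u) (leM : M → M → Prop), IsDirectedOrder leM →
    ∀ (s : M → X) (x : X), NetConv u leM s x →
      NetConv v (prodLE leΛ leM) (fun p : Λ × M => (F p.1).1 (s p.2)) (f.1 x)

/-- The upper limit of a net `A : Λ → Set X` of subsets of a closure space `(X, u)`: the set
of points `x` such that for every `l₀` and every neighbourhood `U` of `x` there is `l ≥ l₀`
with `A l ∩ U ≠ ∅`. -/
def UpperLim (u : CechClosure X) {Λ : Type*} (le : Λ → Λ → Prop) (A : Λ → Set X) : Set X :=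
  {x | ∀ (l₀ : Λ) (U : Set X), u.Nhd x U → ∃ l, le l₀ l ∧ (A l ∩ U).Nonempty}

/-- `g : M → α` is a subnet of `f : Λ → α`: there is `φ : M → Λ` with `g = f ∘ φ` such that
`φ` is residually above any given index of `Λ`. -/
def IsSubnet {α : Type*} {Λ M : Type*} (leΛ : Λ → Λ → Prop) (leM : M → M → Prop)
    (f : Λ → α) (g : M → α) : Prop :=
  ∃ φ : M → Λ, (∀ m, g m = f (φ m)) ∧ ∀ l₀, ∃ m₀, ∀ m, leM m₀ m → leΛ l₀ (φ m)

end CechClosure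

/-! Applying admissibility to the identity of `(Y^X, σ)` shows that evaluation is continuous.
Conversely, `g = ε ∘ (g* × id)`, and `g* × id` is continuous for the product closure because
preimages of neighbourhoods under a continuous map are neighbourhoods. -/

namespace CechClosure

variable {X Y : Type u}
variable {Z : Type u}

theorem cl_mono (u : CechClosure X) {A B : Set X} (h : A ⊆ B) : u.cl A ⊆ u.cl B := by
  rw [← union_eq_self_of_subset_left h, u.cl_union]
  exact subset_union_left

theorem continuous_id (u : CechClosure X) : Continuous u u id := fun A => by
  rw [image_id, image_id]

theorem Continuous.comp {u : CechClosure X} {v : CechClosure Y} {w : CechClosure Z}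
    {g : Y → Z} {f : X → Y} (hg : Continuous v w g) (hf : Continuous u v f) :
    Continuous u w (g ∘ f) := fun A => by
  rw [image_comp, image_comp]
  exact (image_mono (hf A)).trans (hg _)

theorem Continuous.nhd_preimage {u : CechClosure X} {v : CechClosure Y} {f : X → Y}
    (hf : Continuous u v f) {x : X} {U : Set Y} (hU : v.Nhd (f x) U) : u.Nhd x (f ⁻¹' U) :=
  fun hx => hU (v.cl_mono (image_preimage_subset f Uᶜ) (hf _ ⟨x, hx, rfl⟩))

theorem Continuous.prodMap_id {u : CechClosure X} {v : CechClosure Y} (w : CechClosure Z)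
    {f : X → Y} (hf : Continuous u v f) : Continuous (u.prod w) (v.prod w) (Prod.map f id) := by
  rintro S _ ⟨⟨x, z⟩, hxz, rfl⟩ V W hV hW
  obtain ⟨⟨x', z'⟩, hmem, hS⟩ := hxz (f ⁻¹' V) W (hf.nhd_preimage hV) hW
  exact ⟨(f x', z'), hmem, mem_image_of_mem _ hS⟩

/-- A closure operator `σ` on `Y^X` is admissible iff the evaluation mapping
`ε : (Y^X, σ) × (X, u) → (Y, v)`, `ε (f, x) = f x`, is continuous (with respect
to the product closure on `Y^X × X`). -/
theorem admissible_iff_eval_continuous (u : CechClosure X) (v : CechClosure Y)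
    (σ : CechClosure (ContMap u v)) :
    Admissible u v σ ↔
      Continuous (σ.prod u) v (fun p : ContMap u v × X => p.1.1 p.2) :=
  ⟨fun hσ => hσ (ContMap u v) σ id (continuous_id σ),
    fun hε _ _ _ hG => hε.comp (hG.prodMap_id u)⟩

end CechClosure
end

section
/- Let (X,u) and (Y,v) be closure spaces and (f_λ)_{λ∈Λ} a net in Y^X. The net (f_λ) converges continuously to f ∈ Y^X if and only if for every x ∈ X and every neighbourhood V of f(x) there is a neighbourhood U of x and a λ₀ ∈ Λ such that f_λ(U) ⊆ V for all λ ≥ λ₀. -/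
open Set

universe u

namespace CechClosure

variable {X Y : Type u}

def NhdIndex (u : CechClosure X) (x : X) (ι : Type u) : Type u :=
  {p : Set X × ι // u.Nhd x p.1}

namespace NhdIndex

variable {u : CechClosure X} {x : X} {ι : Type u}

def le (m n : NhdIndex u x ι) : Prop := n.1.1 ⊆ m.1.1

theorem isDirectedOrder_le [Nonempty ι] : IsDirectedOrder (le : NhdIndex u x ι → _ → Prop) where
  refl _ := subset_rfl
  trans _ _ _ hab hbc := hbc.trans hab
  directed m n := ⟨⟨(m.1.1 ∩ n.1.1, m.1.2), u.nhd_inter m.2 n.2⟩, inter_subset_left,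
    inter_subset_right⟩
  nonempty := ⟨⟨(univ, Classical.arbitrary ι), u.nhd_univ x⟩⟩

theorem netConv_of_mem [Nonempty ι] {s : NhdIndex u x ι → X} (hs : ∀ m, s m ∈ m.1.1) :
    NetConv u le s x :=
  fun W hW => ⟨⟨(W, Classical.arbitrary ι), hW⟩, fun m hm => hm (hs m)⟩

end NhdIndex

section ContConv

variable {u : CechClosure X} {v : CechClosure Y} {Λ : Type u} {leΛ : Λ → Λ → Prop}
  {F : Λ → ContMap u v} {f : ContMap u v}

theorem ContConv.nonempty_index (h : ContConv u v leΛ F f) (x : X) : Nonempty Λ := by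
  have hconst : NetConv u (fun _ _ : PUnit.{u + 1} => True) (fun _ => x) x :=
    fun U hU => ⟨PUnit.unit, fun _ _ => u.interior_subset U hU⟩
  obtain ⟨⟨l, _⟩, _⟩ := h PUnit (fun _ _ => True) ⟨fun _ => trivial, fun _ _ _ _ _ => trivial,
    fun _ _ => ⟨PUnit.unit, trivial, trivial⟩, inferInstance⟩ _ x hconst univ (v.nhd_univ _)
  exact ⟨l⟩

/- If no pair `(U, l₀)` works, pick for every neighbourhood `U` of `x` and every `l₀` a point
`y ∈ U` and an `l ≥ l₀` with `F l y ∉ V`. The points `y` form a net converging to `x`, while the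
net `F l (y m)` is frequently outside `V`. -/
theorem ContConv.exists_nhd_image_subset (h : ContConv u v leΛ F f) {x : X} {V : Set Y}
    (hV : v.Nhd (f.1 x) V) :
    ∃ (U : Set X) (l₀ : Λ), u.Nhd x U ∧ ∀ l, leΛ l₀ l → (F l).1 '' U ⊆ V := by
  by_contra! hbad
  have : Nonempty Λ := h.nonempty_index x
  have hwitness (m : NhdIndex u x Λ) : ∃ l, leΛ m.1.2 l ∧ ∃ y ∈ m.1.1, (F l).1 y ∉ V := by
    obtain ⟨l, hl, hsub⟩ := hbad m.1.1 m.1.2 m.2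
    obtain ⟨_, ⟨y, hy, rfl⟩, hyV⟩ := not_subset.1 hsub
    exact ⟨l, hl, y, hy, hyV⟩
  choose l hl y hy hyV using hwitness
  obtain ⟨⟨l₀, m₀⟩, hres⟩ := h _ _ NhdIndex.isDirectedOrder_le y x
    (NhdIndex.netConv_of_mem hy) V hV
  let m : NhdIndex u x Λ := ⟨(m₀.1.1, l₀), m₀.2⟩
  exact hyV m (hres (l m, m) ⟨hl m, subset_rfl⟩)

theorem contConv_of_exists_nhd_image_subset
    (h : ∀ (x : X) (V : Set Y), v.Nhd (f.1 x) V →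
      ∃ (U : Set X) (l₀ : Λ), u.Nhd x U ∧ ∀ l, leΛ l₀ l → (F l).1 '' U ⊆ V) :
    ContConv u v leΛ F f := by
  intro M leM _ s x hs V hV
  obtain ⟨U, l₀, hU, hsub⟩ := h x V hV
  obtain ⟨m₀, hm₀⟩ := hs U hU
  exact ⟨(l₀, m₀), fun p hp => hsub p.1 hp.1 ⟨s p.2, hm₀ p.2 hp.2, rfl⟩⟩

end ContConv

theorem contConv_iff_nhd_general (u : CechClosure X) (v : CechClosure Y) {Λ : Type u}
    (leΛ : Λ → Λ → Prop) (F : Λ → ContMap u v)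
    (f : ContMap u v) :
    ContConv u v leΛ F f ↔
      ∀ (x : X) (V : Set Y), v.Nhd (f.1 x) V →
        ∃ (U : Set X) (l₀ : Λ), u.Nhd x U ∧ ∀ l, leΛ l₀ l → (F l).1 '' U ⊆ V :=
  ⟨fun h _ _ hV => h.exists_nhd_image_subset hV, contConv_of_exists_nhd_image_subset⟩

/-- A net `(f_λ)` in `Y^X` converges continuously to `f ∈ Y^X` iff for every `x ∈ X` and
every neighbourhood `V` of `f x` there are a neighbourhood `U` of `x` and an index `l₀`
such that `f_l '' U ⊆ V` for all `l ≥ l₀`. -/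
theorem contConv_iff_nhd (u : CechClosure X) (v : CechClosure Y) {Λ : Type u}
    (leΛ : Λ → Λ → Prop) (hΛ : IsDirectedOrder leΛ) (F : Λ → ContMap u v)
    (f : ContMap u v) :
    ContConv u v leΛ F f ↔
      ∀ (x : X) (V : Set Y), v.Nhd (f.1 x) V →
        ∃ (U : Set X) (l₀ : Λ), u.Nhd x U ∧ ∀ l, leΛ l₀ l → (F l).1 '' U ⊆ V :=
  contConv_iff_nhd_general u v leΛ F f

end CechClosure
end

section
/- Let (X,u) and (Y,v) be closure spaces and (f_λ)_{λ∈Λ} a net in Y^X. The net (f_λ) converges continuously to f ∈ Y^X if and only if limsup_Λ f_λ⁻¹(B) ⊆ f⁻¹(v(B)) for every subset B of Y. -/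
open Set

universe u

namespace CechClosure

section Nets

variable {X : Type u} {Λ M : Type*}

theorem IsDirectedOrder.prodLE {leΛ : Λ → Λ → Prop} {leM : M → M → Prop}
    (hΛ : IsDirectedOrder leΛ) (hM : IsDirectedOrder leM) :
    IsDirectedOrder (prodLE leΛ leM) where
  refl p := ⟨hΛ.refl p.1, hM.refl p.2⟩
  trans p q r hpq hqr := ⟨hΛ.trans _ _ _ hpq.1 hqr.1, hM.trans _ _ _ hpq.2 hqr.2⟩
  directed p q := by
    obtain ⟨a, hpa, hqa⟩ := hΛ.directed p.1 q.1
    obtain ⟨b, hpb, hqb⟩ := hM.directed p.2 q.2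
    exact ⟨(a, b), ⟨hpa, hpb⟩, ⟨hqa, hqb⟩⟩
  nonempty :=
    have := hΛ.nonempty
    have := hM.nonempty
    inferInstance

theorem isDirectedOrder_nhd_supset (u : CechClosure X) (x : X) :
    IsDirectedOrder (fun U V : {U : Set X // u.Nhd x U} => V.1 ⊆ U.1) where
  refl _ := subset_rfl
  trans _ _ _ hUV hVW := hVW.trans hUV
  directed U V := ⟨⟨U.1 ∩ V.1, u.nhd_inter U.2 V.2⟩, inter_subset_left, inter_subset_right⟩
  nonempty := ⟨⟨univ, u.nhd_univ x⟩⟩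

theorem nhd_compl_iff_notMem_cl (u : CechClosure X) {x : X} {A : Set X} :
    u.Nhd x Aᶜ ↔ x ∉ u.cl A := by
  rw [Nhd, interior, compl_compl, mem_compl_iff]

theorem mem_cl_of_netConv_of_frequently (u : CechClosure X) {le : Λ → Λ → Prop}
    {s : Λ → X} {x : X} {A : Set X} (hs : NetConv u le s x)
    (hA : ∀ l₀, ∃ l, le l₀ l ∧ s l ∈ A) : x ∈ u.cl A := by
  by_contra hx
  obtain ⟨l₀, hl₀⟩ := hs Aᶜ (u.nhd_compl_iff_notMem_cl.mpr hx)
  obtain ⟨l, hl, hsA⟩ := hA l₀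
  exact hl₀ l hl hsA

end Nets

section UpperLim

variable {X Λ : Type u}

/-- Index the witnesses of `x ∈ limsup A_λ` by pairs `(λ, U)` of an index and a neighbourhood
of `x`: the chosen points converge to `x`, and they lie in `A_φ` for indices `φ ≥ λ`. -/
theorem exists_netConv_frequently_mem_of_mem_upperLim (u : CechClosure X)
    {leΛ : Λ → Λ → Prop} (hΛ : IsDirectedOrder leΛ) {A : Λ → Set X} {x : X}
    (hx : x ∈ UpperLim u leΛ A) :
    ∃ (M : Type u) (leM : M → M → Prop), IsDirectedOrder leM ∧ ∃ s : M → X,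
      NetConv u leM s x ∧ ∀ p₀ : Λ × M, ∃ p, prodLE leΛ leM p₀ p ∧ s p.2 ∈ A p.1 := by
  choose φ hφ s hsA hsU using fun m : Λ × {U : Set X // u.Nhd x U} => hx m.1 m.2.1 m.2.2
  refine ⟨_, _, hΛ.prodLE (isDirectedOrder_nhd_supset u x), s, ?_, ?_⟩
  · intro U hU
    obtain ⟨l⟩ := hΛ.nonempty
    exact ⟨(l, ⟨U, hU⟩), fun m hm => hm.2 (hsU m)⟩
  · rintro ⟨l₀, m₀⟩
    obtain ⟨c, hl₀c, hm₀c⟩ := hΛ.directed l₀ m₀.1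
    let m := (c, m₀.2)
    exact ⟨(φ m, m), ⟨hΛ.trans _ _ _ hl₀c (hφ m), hm₀c, subset_rfl⟩, hsA m⟩

theorem eventually_notMem_of_notMem_upperLim (u : CechClosure X) {M : Type*}
    {leΛ : Λ → Λ → Prop} {leM : M → M → Prop} {A : Λ → Set X} {s : M → X} {x : X}
    (hx : x ∉ UpperLim u leΛ A) (hs : NetConv u leM s x) :
    ∃ p₀ : Λ × M, ∀ p, prodLE leΛ leM p₀ p → s p.2 ∉ A p.1 := by
  simp only [UpperLim, mem_ofPred_eq, not_forall, not_exists, not_and] at hx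
  obtain ⟨l₀, W, hW, hdisj⟩ := hx
  obtain ⟨m₀, hm₀⟩ := hs W hW
  exact ⟨(l₀, m₀), fun p hp hsA => hdisj p.1 hp.1 ⟨s p.2, hsA, hm₀ p.2 hp.2⟩⟩

end UpperLim

variable {X Y : Type u}

/-- A net `(f_λ)` in `Y^X` converges continuously to `f ∈ Y^X` iff
`limsup_Λ f_λ⁻¹(B) ⊆ f⁻¹(v B)` for every subset `B` of `Y`. -/
theorem contConv_iff_upperLim (u : CechClosure X) (v : CechClosure Y) {Λ : Type u}
    (leΛ : Λ → Λ → Prop) (hΛ : IsDirectedOrder leΛ) (F : Λ → ContMap u v)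
    (f : ContMap u v) :
    ContConv u v leΛ F f ↔
      ∀ B : Set Y, UpperLim u leΛ (fun l => (F l).1 ⁻¹' B) ⊆ f.1 ⁻¹' (v.cl B) := by
  constructor
  · intro h B x hx
    obtain ⟨M, leM, hM, s, hs, hfreq⟩ := exists_netConv_frequently_mem_of_mem_upperLim u hΛ hx
    exact v.mem_cl_of_netConv_of_frequently (h M leM hM s x hs) hfreq
  · intro h M leM _ s x hs U hU
    -- `v.Nhd (f x) U` unfolds to `f x ∉ v.cl Uᶜ`.
    have hx : x ∉ UpperLim u leΛ (fun l => (F l).1 ⁻¹' Uᶜ) := fun hmem => hU (h Uᶜ hmem)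
    obtain ⟨p₀, hp₀⟩ := eventually_notMem_of_notMem_upperLim u hx hs
    exact ⟨p₀, fun p hp => not_not.mp (hp₀ p hp)⟩

end CechClosure
end

section
/- Let (X,u) and (Y,v) be closure spaces and {σ_α} a collection of Čech closure operators on Y^X. (1) If every σ_α is proper, then both the infimum ∧σ_α and the supremum ∨σ_α are proper. (2) If every σ_α is admissible, then the supremum ∨σ_α is admissible. -/
/-!
Properness passes to coarser closure operators and admissibility to finer ones (fewer, resp.
more, neighbourhoods). The infimum is coarser than each `σ_α` and the supremum finer, which gives
properness of `∧ σ_α` and admissibility of `∨ σ_α`. For properness of `∨ σ_α`: a map into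
`(Y^X, ∨ σ_α)` is continuous as soon as it is continuous into every `σ_α`, because a
`∨ σ_α`-neighbourhood contains a finite intersection of `σ_α`-neighbourhoods, whose preimage is
again a neighbourhood.
-/

open Set

universe u

namespace CechClosure

variable {X Y : Type u}

/-- The infimum (meet) `∧ σ_α` of a collection of closure operators: the neighbourhood
system at `x` is `⋂_α 𝒩_α(x)`, and a point lies in the closure of `A` iff every such
neighbourhood meets `A`. -/
def iInfCl {α : Type u} {ι : Type*} [Nonempty ι] (σ : ι → CechClosure α) : CechClosure α where
  cl A := {x | ∀ U : Set α, (∀ i, (σ i).Nhd x U) → (U ∩ A).Nonempty}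
  cl_empty := by
    ext x
    simp only [mem_setOf_eq, mem_empty_iff_false, iff_false]
    intro h
    rcases h univ (fun i => (σ i).nhd_univ x) with ⟨y, -, hy⟩
    exact hy
  subset_cl := by
    intro A x hx U hU
    obtain ⟨i⟩ := ‹Nonempty ι›
    exact ⟨x, (σ i).interior_subset U (hU i), hx⟩
  cl_union := by
    intro A B
    ext x
    simp only [mem_setOf_eq, mem_union]
    constructor
    · intro h
      by_contra hc
      push_neg at hc
      obtain ⟨h1, h2⟩ := hc
      simp only [← Set.not_nonempty_iff_eq_empty] at h1 h2
      obtain ⟨U1, hU1, hne1⟩ := h1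
      obtain ⟨U2, hU2, hne2⟩ := h2
      rcases h (U1 ∩ U2) (fun i => (σ i).nhd_inter (hU1 i) (hU2 i)) with ⟨y, hyU, hyAB⟩
      rcases hyAB with hyA | hyB
      · exact hne1 ⟨y, hyU.1, hyA⟩
      · exact hne2 ⟨y, hyU.2, hyB⟩
    · rintro (h | h) U hU
      · rcases h U hU with ⟨y, hy1, hy2⟩
        exact ⟨y, hy1, Or.inl hy2⟩
      · rcases h U hU with ⟨y, hy1, hy2⟩
        exact ⟨y, hy1, Or.inr hy2⟩

/-- The supremum (join) `∨ σ_α` of a collection of closure operators: the union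
`⋃_α 𝒩_α(x)` is a neighbourhood subbase at `x` (neighbourhoods contain finite
intersections of its members), and a point lies in the closure of `A` iff every such
finite intersection meets `A`. -/
def iSupCl {α : Type u} {ι : Type*} (σ : ι → CechClosure α) : CechClosure α where
  cl A := {x | ∀ F : Finset (Set α), (∀ U ∈ F, ∃ i, (σ i).Nhd x U) →
    ((⋂₀ (F : Set (Set α))) ∩ A).Nonempty}
  cl_empty := by
    ext x
    simp only [mem_setOf_eq, mem_empty_iff_false, iff_false]
    intro h
    rcases h ∅ (by simp) with ⟨y, -, hy⟩
    exact hy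
  subset_cl := by
    intro A x hx F hF
    refine ⟨x, ?_, hx⟩
    intro U hU
    rcases hF U hU with ⟨i, hi⟩
    exact (σ i).interior_subset U hi
  cl_union := by
    classical
    intro A B
    ext x
    simp only [mem_setOf_eq, mem_union]
    constructor
    · intro h
      by_contra hc
      push_neg at hc
      obtain ⟨h1, h2⟩ := hc
      simp only [← Set.not_nonempty_iff_eq_empty] at h1 h2
      obtain ⟨F1, hF1, hne1⟩ := h1
      obtain ⟨F2, hF2, hne2⟩ := h2
      rcases h (F1 ∪ F2) (by
        intro U hU
        rcases Finset.mem_union.1 hU with hU | hU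
        · exact hF1 U hU
        · exact hF2 U hU) with ⟨y, hyI, hyAB⟩
      rw [Finset.coe_union, sInter_union] at hyI
      rcases hyAB with hyA | hyB
      · exact hne1 ⟨y, hyI.1, hyA⟩
      · exact hne2 ⟨y, hyI.2, hyB⟩
    · rintro (h | h) F hF
      · rcases h F hF with ⟨y, hy1, hy2⟩
        exact ⟨y, hy1, Or.inl hy2⟩
      · rcases h F hF with ⟨y, hy1, hy2⟩
        exact ⟨y, hy1, Or.inr hy2⟩

variable {Z : Type u}

theorem Nhd.mono {u : CechClosure X} {x : X} {U V : Set X} (hU : u.Nhd x U) (h : U ⊆ V) :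
    u.Nhd x V :=
  fun hx => hU (u.cl_mono (compl_subset_compl.2 h) hx)

theorem Nhd.inter_nonempty_of_mem_cl {u : CechClosure X} {x : X} {U A : Set X}
    (hU : u.Nhd x U) (hx : x ∈ u.cl A) : (U ∩ A).Nonempty := by
  by_contra h
  exact hU (u.cl_mono (fun a ha haU => h ⟨a, haU, ha⟩) hx)

theorem nhd_biInter_finset (u : CechClosure X) {x : X} {β : Type*} (F : Finset β)
    (f : β → Set X) (h : ∀ b ∈ F, u.Nhd x (f b)) : u.Nhd x (⋂ b ∈ F, f b) := by
  classical
  induction F using Finset.induction_on with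
  | empty => simpa using u.nhd_univ x
  | insert a s _ ih =>
    rw [Finset.set_biInter_insert]
    exact u.nhd_inter (h a (Finset.mem_insert_self a s))
      (ih fun b hb => h b (Finset.mem_insert_of_mem hb))

theorem cl_subset_cl_of_nhd_imp {σ τ : CechClosure Y} (hστ : ∀ y U, σ.Nhd y U → τ.Nhd y U)
    (B : Set Y) : τ.cl B ⊆ σ.cl B := by
  intro y hy
  by_contra hσ
  exact hστ y Bᶜ (by simpa [Nhd, interior] using hσ) (by simpa using hy)

theorem Continuous.mono_rng {w : CechClosure Z} {σ τ : CechClosure Y} {f : Z → Y}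
    (hf : Continuous w τ f) (hστ : ∀ y U, σ.Nhd y U → τ.Nhd y U) : Continuous w σ f :=
  fun A => (hf A).trans (cl_subset_cl_of_nhd_imp hστ _)

theorem Proper.mono {u : CechClosure X} {v : CechClosure Y} {σ τ : CechClosure (ContMap u v)}
    (hσ : Proper u v σ) (hτσ : ∀ f U, τ.Nhd f U → σ.Nhd f U) : Proper u v τ :=
  fun Z w G hG => (hσ Z w G hG).mono_rng hτσ

theorem Admissible.mono {u : CechClosure X} {v : CechClosure Y}
    {σ τ : CechClosure (ContMap u v)} (hσ : Admissible u v σ)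
    (hστ : ∀ f U, σ.Nhd f U → τ.Nhd f U) : Admissible u v τ :=
  fun Z w G hG => hσ Z w G (hG.mono_rng hστ)

theorem nhd_iInfCl_iff {α : Type u} {ι : Type*} [Nonempty ι] (σ : ι → CechClosure α) {x : α}
    {U : Set α} : (iInfCl σ).Nhd x U ↔ ∀ i, (σ i).Nhd x U := by
  constructor
  · intro hU i
    have hU' : ¬∀ V : Set α, (∀ j, (σ j).Nhd x V) → (V ∩ Uᶜ).Nonempty := hU
    push Not at hU'
    obtain ⟨V, hV, hVU⟩ := hU'
    exact (hV i).mono fun y hy => by_contra fun hyU => hVU.subset ⟨hy, hyU⟩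
  · intro hU hx
    obtain ⟨y, hyU, hyUc⟩ := hx U hU
    exact hyUc hyU

theorem Nhd.iSupCl {α : Type u} {ι : Type*} {σ : ι → CechClosure α} {i : ι} {x : α}
    {U : Set α} (hU : (σ i).Nhd x U) : (iSupCl σ).Nhd x U := by
  intro hx
  obtain ⟨y, hyU, hyUc⟩ := hx {U} (by simpa using ⟨i, hU⟩)
  exact hyUc (by simpa using hyU)

theorem continuous_iSupCl_iff {α : Type u} {ι : Type*} {w : CechClosure Z}
    {σ : ι → CechClosure α} {G : Z → α} :
    Continuous w (iSupCl σ) G ↔ ∀ i, Continuous w (σ i) G := by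
  refine ⟨fun hG i => hG.mono_rng fun _ _ => Nhd.iSupCl, fun hG A => ?_⟩
  rintro _ ⟨z, hz, rfl⟩ F hF
  choose idx hidx using hF
  have hW : w.Nhd z (⋂ V ∈ F.attach, G ⁻¹' V.1) :=
    w.nhd_biInter_finset _ _ fun V _ => (hG (idx V.1 V.2)).nhd_preimage (hidx V.1 V.2)
  obtain ⟨a, haW, haA⟩ := hW.inter_nonempty_of_mem_cl hz
  refine ⟨G a, fun V hV => ?_, a, haA, rfl⟩
  simpa using mem_iInter₂.1 haW ⟨V, hV⟩ (F.mem_attach _)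

/-- (1) If every `σ_α` is proper, then the infimum `∧ σ_α` and the supremum `∨ σ_α` are
proper.  (2) If every `σ_α` is admissible, then the supremum `∨ σ_α` is admissible. -/
theorem proper_inf_sup_and_admissible_sup (u : CechClosure X) (v : CechClosure Y)
    {ι : Type u} [Nonempty ι] (σ : ι → CechClosure (ContMap u v)) :
    ((∀ i, Proper u v (σ i)) → Proper u v (iInfCl σ) ∧ Proper u v (iSupCl σ)) ∧
    ((∀ i, Admissible u v (σ i)) → Admissible u v (iSupCl σ)) := by
  obtain ⟨i₀⟩ := ‹Nonempty ι›
  refine ⟨fun hp => ⟨?_, ?_⟩, fun ha => ?_⟩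
  · exact (hp i₀).mono fun _ _ hU => (nhd_iInfCl_iff σ).1 hU i₀
  · exact fun Z w G hG => continuous_iSupCl_iff.2 fun i => hp i Z w G hG
  · exact (ha i₀).mono fun _ _ => Nhd.iSupCl

end CechClosure
end

section
/- Let (X,u) and (Y,v) be closure spaces and σ a Čech closure operator on Y^X. Then σ is proper if and only if every net in Y^X that converges continuously to some f ∈ Y^X also converges to f in (Y^X,σ); and σ is admissible if and only if every net in Y^X that converges to some f ∈ Y^X in (Y^X,σ) also converges continuously to f. -/
open Set

universe u

namespace CechClosure

variable {X Y : Type u}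

/-!
A net `F : Λ → Y^X` with candidate limit `f` is the same as a map on `Λ ∪ {∞}`, where points
of `Λ` are isolated and `∞` is approached by the tails of `Λ`. Convergence of `F` to `f` in
`σ` is continuity of this map, and continuous convergence of `F` to `f` is continuity of the
associated map on `(Λ ∪ {∞}) × X`; so properness and admissibility, applied to
`Z = Λ ∪ {∞}`, yield the two net conditions. Conversely, continuity of a map between closure
spaces can be tested on nets indexed by neighbourhood systems, and along such nets the net
conditions give continuity of `g*` (for properness) and of `g` (for admissibility).
-/

section ClosureSpace

variable {Z : Type u}

theorem nhd_mem (u : CechClosure X) {x : X} {U : Set X} (h : u.Nhd x U) : x ∈ U :=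
  u.interior_subset U h

theorem mem_cl_iff (u : CechClosure X) (A : Set X) (x : X) :
    x ∈ u.cl A ↔ ∀ U, u.Nhd x U → (U ∩ A).Nonempty := by
  constructor
  · intro hx U hU
    by_contra h
    exact hU (u.cl_mono (fun a ha haU => h ⟨a, haU, ha⟩) hx)
  · intro h
    by_contra hx
    have hA : u.Nhd x Aᶜ := by
      show x ∉ u.cl Aᶜᶜ
      rwa [compl_compl]
    obtain ⟨a, haA, ha⟩ := h Aᶜ hA
    exact haA ha

theorem continuous_iff_nhd {u : CechClosure X} {v : CechClosure Y} (f : X → Y) :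
    Continuous u v f ↔ ∀ x V, v.Nhd (f x) V → u.Nhd x (f ⁻¹' V) := by
  constructor
  · intro hf x V hV hx
    have hfx : f x ∈ v.cl (f '' (f ⁻¹' V)ᶜ) := hf _ ⟨x, hx, rfl⟩
    exact hV (v.cl_mono (by rintro _ ⟨a, ha, rfl⟩; exact ha) hfx)
  · rintro h A _ ⟨x, hx, rfl⟩
    refine (v.mem_cl_iff _ _).2 fun V hV => ?_
    obtain ⟨a, haV, haA⟩ := (u.mem_cl_iff A x).1 hx _ (h x V hV)
    exact ⟨f a, haV, a, haA, rfl⟩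

theorem nhd_prod_iff (w : CechClosure Z) (u : CechClosure X) (p : Z × X) (S : Set (Z × X)) :
    (w.prod u).Nhd p S ↔ ∃ W U, w.Nhd p.1 W ∧ u.Nhd p.2 U ∧ W ×ˢ U ⊆ S := by
  show ¬(∀ W U, w.Nhd p.1 W → u.Nhd p.2 U → (W ×ˢ U ∩ Sᶜ).Nonempty) ↔ _
  simp only [inter_compl_nonempty_iff, not_forall, not_not, exists_prop]

theorem continuous_prod_fst (w : CechClosure Z) (u : CechClosure X) :
    Continuous (w.prod u) w Prod.fst :=
  (continuous_iff_nhd _).2 fun _ W hW =>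
    (nhd_prod_iff _ _ _ _).2 ⟨W, univ, hW, u.nhd_univ _, fun _ hq => hq.1⟩

theorem continuous_prod_snd (w : CechClosure Z) (u : CechClosure X) :
    Continuous (w.prod u) u Prod.snd :=
  (continuous_iff_nhd _).2 fun _ U hU =>
    (nhd_prod_iff _ _ _ _).2 ⟨univ, U, w.nhd_univ _, hU, fun _ hq => hq.2⟩

end ClosureSpace

section DirectedSet

def nhdLE (u : CechClosure X) (x : X) :
    {U : Set X // u.Nhd x U} → {U : Set X // u.Nhd x U} → Prop :=
  fun a b => b.1 ⊆ a.1

theorem isDirectedOrder_nhdLE (u : CechClosure X) (x : X) : IsDirectedOrder (u.nhdLE x) where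
  refl _ := subset_rfl
  trans _ _ _ h₁ h₂ := h₂.trans h₁
  directed a b := ⟨⟨a.1 ∩ b.1, u.nhd_inter a.2 b.2⟩, inter_subset_left, inter_subset_right⟩
  nonempty := ⟨⟨univ, u.nhd_univ x⟩⟩

variable {Λ M : Type*} {leΛ : Λ → Λ → Prop} {leM : M → M → Prop}

theorem isDirectedOrder_prodLE (hΛ : IsDirectedOrder leΛ) (hM : IsDirectedOrder leM) :
    IsDirectedOrder (prodLE leΛ leM) where
  refl a := ⟨hΛ.refl a.1, hM.refl a.2⟩
  trans _ _ _ h₁ h₂ := ⟨hΛ.trans _ _ _ h₁.1 h₂.1, hM.trans _ _ _ h₁.2 h₂.2⟩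
  directed a b := by
    obtain ⟨c, hac, hbc⟩ := hΛ.directed a.1 b.1
    obtain ⟨d, had, hbd⟩ := hM.directed a.2 b.2
    exact ⟨(c, d), ⟨hac, had⟩, ⟨hbc, hbd⟩⟩
  nonempty := by
    obtain ⟨a⟩ := hΛ.nonempty
    obtain ⟨b⟩ := hM.nonempty
    exact ⟨(a, b)⟩

theorem IsDirectedOrder.frequently_or (hΛ : IsDirectedOrder leΛ) {P Q : Λ → Prop}
    (h : ∀ l₀, ∃ l, leΛ l₀ l ∧ (P l ∨ Q l)) :
    (∀ l₀, ∃ l, leΛ l₀ l ∧ P l) ∨ (∀ l₀, ∃ l, leΛ l₀ l ∧ Q l) := by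
  by_contra hc
  push Not at hc
  obtain ⟨⟨a, ha⟩, ⟨b, hb⟩⟩ := hc
  obtain ⟨c, hac, hbc⟩ := hΛ.directed a b
  obtain ⟨l, hcl, hl | hl⟩ := h c
  · exact ha l (hΛ.trans _ _ _ hac hcl) hl
  · exact hb l (hΛ.trans _ _ _ hbc hcl) hl

end DirectedSet

section Net

variable {Z : Type u}

theorem NetConv.diag {w : CechClosure Z} {Λ : Type*} {le : Λ → Λ → Prop}
    (hΛ : IsDirectedOrder le) {t : Λ × Λ → Z} {z : Z} (h : NetConv w (prodLE le le) t z) :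
    NetConv w le (fun l => t (l, l)) z := by
  intro W hW
  obtain ⟨⟨a, b⟩, hab⟩ := h W hW
  obtain ⟨c, hac, hbc⟩ := hΛ.directed a b
  exact ⟨c, fun l hl => hab (l, l) ⟨hΛ.trans _ _ _ hac hl, hΛ.trans _ _ _ hbc hl⟩⟩

theorem netConv_nhdLE {u : CechClosure X} {x : X} {t : {U : Set X // u.Nhd x U} → X}
    (ht : ∀ U, t U ∈ U.1) : NetConv u (u.nhdLE x) t x :=
  fun U hU => ⟨⟨U, hU⟩, fun U' hU' => hU' (ht U')⟩

theorem Continuous.netConv {w : CechClosure Z} {v : CechClosure Y} {G : Z → Y}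
    (hG : Continuous w v G) {Λ : Type*} {le : Λ → Λ → Prop} {s : Λ → Z} {z : Z}
    (hs : NetConv w le s z) : NetConv v le (G ∘ s) (G z) :=
  fun V hV => hs _ ((continuous_iff_nhd G).1 hG z V hV)

theorem continuous_of_forall_netConv {w : CechClosure Z} {v : CechClosure Y} {G : Z → Y}
    (h : ∀ (Λ : Type u) (le : Λ → Λ → Prop), IsDirectedOrder le →
      ∀ (s : Λ → Z) (z : Z), NetConv w le s z → NetConv v le (G ∘ s) (G z)) :
    Continuous w v G := by
  rintro A _ ⟨z, hz, rfl⟩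
  choose t ht using fun W : {W : Set Z // w.Nhd z W} => (w.mem_cl_iff A z).1 hz W.1 W.2
  have hGt := h _ _ (w.isDirectedOrder_nhdLE z) t z (netConv_nhdLE fun W => (ht W).1)
  refine (v.mem_cl_iff _ _).2 fun V hV => ?_
  obtain ⟨W₀, hW₀⟩ := hGt V hV
  exact ⟨G (t W₀), hW₀ W₀ subset_rfl, t W₀, (ht W₀).2, rfl⟩

theorem Continuous.netConv_prodLE {w : CechClosure Z} {u : CechClosure X} {v : CechClosure Y}
    {g : Z × X → Y} (hg : Continuous (w.prod u) v g) {Λ M : Type*} {leΛ : Λ → Λ → Prop}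
    {leM : M → M → Prop} {s : Λ → Z} {t : M → X} {z : Z} {x : X} (hs : NetConv w leΛ s z)
    (ht : NetConv u leM t x) :
    NetConv v (prodLE leΛ leM) (fun p => g (s p.1, t p.2)) (g (z, x)) := by
  intro V hV
  obtain ⟨W, U, hW, hU, hWU⟩ :=
    (nhd_prod_iff _ _ _ _).1 ((continuous_iff_nhd g).1 hg (z, x) V hV)
  obtain ⟨l₀, hl₀⟩ := hs W hW
  obtain ⟨m₀, hm₀⟩ := ht U hU
  exact ⟨(l₀, m₀), fun p hp => hWU (mk_mem_prod (hl₀ _ hp.1) (hm₀ _ hp.2))⟩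

end Net

section OptSpace

variable {Λ : Type u} {le : Λ → Λ → Prop}

/-- The closure space `Λ ∪ {∞}` of a directed set, with `∞` encoded as `none`. -/
def optSpace (le : Λ → Λ → Prop) (hΛ : IsDirectedOrder le) : CechClosure (Option Λ) where
  cl S := S ∪ {z | z = none ∧ ∀ l₀, ∃ l, le l₀ l ∧ some l ∈ S}
  cl_empty := by
    obtain ⟨a⟩ := hΛ.nonempty
    ext z
    simp only [mem_union, mem_empty_iff_false, mem_ofPred_eq, false_or, iff_false, not_and]
    rintro rfl hz
    obtain ⟨l, -, hl⟩ := hz a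
    exact hl
  subset_cl _ := subset_union_left
  cl_union S T := by
    ext z
    simp only [mem_union, mem_ofPred_eq]
    constructor
    · rintro ((hz | hz) | ⟨rfl, hz⟩)
      · exact Or.inl (Or.inl hz)
      · exact Or.inr (Or.inl hz)
      · rcases hΛ.frequently_or hz with hS | hT
        · exact Or.inl (Or.inr ⟨rfl, hS⟩)
        · exact Or.inr (Or.inr ⟨rfl, hT⟩)
    · rintro ((hz | ⟨rfl, hz⟩) | (hz | ⟨rfl, hz⟩))
      · exact Or.inl (Or.inl hz)
      · exact Or.inr ⟨rfl, fun l₀ => (hz l₀).imp fun _ hl => ⟨hl.1, Or.inl hl.2⟩⟩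
      · exact Or.inl (Or.inr hz)
      · exact Or.inr ⟨rfl, fun l₀ => (hz l₀).imp fun _ hl => ⟨hl.1, Or.inr hl.2⟩⟩

theorem optSpace_nhd_some (hΛ : IsDirectedOrder le) (l : Λ) (U : Set (Option Λ)) :
    (optSpace le hΛ).Nhd (some l) U ↔ some l ∈ U := by
  show ¬(some l ∈ Uᶜ ∪ _) ↔ _
  simp

theorem optSpace_nhd_none (hΛ : IsDirectedOrder le) (U : Set (Option Λ)) :
    (optSpace le hΛ).Nhd none U ↔ none ∈ U ∧ ∃ l₀, ∀ l, le l₀ l → some l ∈ U := by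
  show ¬(none ∈ Uᶜ ∪ {z | z = none ∧ ∀ l₀, ∃ l, le l₀ l ∧ some l ∈ Uᶜ}) ↔ _
  simp only [mem_union, mem_compl_iff, mem_ofPred_eq, true_and]
  push Not
  rfl

theorem netConv_some_none (hΛ : IsDirectedOrder le) : NetConv (optSpace le hΛ) le some none :=
  fun U hU => ((optSpace_nhd_none hΛ U).1 hU).2

theorem continuous_optSpace_elim_iff {α : Type u} {w : CechClosure α} (hΛ : IsDirectedOrder le)
    {s : Λ → α} {a : α} :
    Continuous (optSpace le hΛ) w (fun z => z.elim a s) ↔ NetConv w le s a := by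
  refine ⟨fun h => h.netConv (netConv_some_none hΛ), fun h => (continuous_iff_nhd _).2 ?_⟩
  rintro (_ | l) V hV
  · obtain ⟨l₀, hl₀⟩ := h V hV
    exact (optSpace_nhd_none hΛ _).2 ⟨w.nhd_mem hV, l₀, hl₀⟩
  · exact (optSpace_nhd_some hΛ _ _).2 (w.nhd_mem hV)

end OptSpace

section FunctionSpace

variable {Z : Type u} {u : CechClosure X} {v : CechClosure Y}

theorem contConv_of_continuous_uncurry {w : CechClosure Z} {G : Z → ContMap u v}
    (hG : Continuous (w.prod u) v (fun p => (G p.1).1 p.2)) {Λ : Type u} {le : Λ → Λ → Prop}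
    {s : Λ → Z} {z : Z} (hs : NetConv w le s z) : ContConv u v le (G ∘ s) (G z) :=
  fun _ _ _ _ _ ht => hG.netConv_prodLE hs ht

theorem ContConv.exists_nhd_mapsTo {Λ : Type u} {le : Λ → Λ → Prop} (hΛ : IsDirectedOrder le)
    {F : Λ → ContMap u v} {f : ContMap u v} (hF : ContConv u v le F f) {x : X} {V : Set Y}
    (hV : v.Nhd (f.1 x) V) : ∃ l₀ U, u.Nhd x U ∧ ∀ l, le l₀ l → MapsTo (F l).1 U V := by
  -- otherwise the witnesses, indexed by `Λ × 𝒩(x)`, form a net converging to `x` along which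
  -- `F` stays outside `V`
  by_contra hcon
  simp only [MapsTo, not_exists, not_and, not_forall, exists_prop] at hcon
  choose lf hlf xf hxf hnot using fun m : Λ × {U : Set X // u.Nhd x U} => hcon m.1 m.2.1 m.2.2
  have hxf_conv : NetConv u (prodLE le (u.nhdLE x)) xf x := by
    intro U hU
    obtain ⟨a⟩ := hΛ.nonempty
    exact ⟨(a, ⟨U, hU⟩), fun m hm => hm.2 (hxf m)⟩
  obtain ⟨⟨l₁, m₁⟩, hres⟩ :=
    hF _ _ (isDirectedOrder_prodLE hΛ (u.isDirectedOrder_nhdLE x)) xf x hxf_conv V hV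
  obtain ⟨c, hl₁c, hm₁c⟩ := hΛ.directed l₁ m₁.1
  exact hnot (c, m₁.2) <| hres (lf (c, m₁.2), (c, m₁.2))
    ⟨hΛ.trans _ _ _ hl₁c (hlf (c, m₁.2)), hm₁c, subset_rfl⟩

theorem ContConv.continuous_optSpace_prod {Λ : Type u} {le : Λ → Λ → Prop}
    (hΛ : IsDirectedOrder le) {F : Λ → ContMap u v} {f : ContMap u v}
    (hF : ContConv u v le F f) :
    Continuous ((optSpace le hΛ).prod u) v (fun p : Option Λ × X => (p.1.elim f F).1 p.2) := by
  refine (continuous_iff_nhd _).2 fun ⟨z, x⟩ V hV => (nhd_prod_iff _ _ _ _).2 ?_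
  rcases z with _ | l
  · obtain ⟨l₀, U, hU, hFU⟩ := hF.exists_nhd_mapsTo hΛ hV
    refine ⟨insert none (some '' {l | le l₀ l}), U ∩ f.1 ⁻¹' V, ?_,
      u.nhd_inter hU ((continuous_iff_nhd f.1).1 f.2 x V hV), ?_⟩
    · exact (optSpace_nhd_none hΛ _).2
        ⟨mem_insert _ _, l₀, fun l hl => mem_insert_of_mem _ (mem_image_of_mem _ hl)⟩
    · rintro ⟨_, x'⟩ ⟨rfl | ⟨l, hl, rfl⟩, hx'U, hx'V⟩
      · exact hx'V
      · exact hFU l hl hx'U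
  · refine ⟨{some l}, (F l).1 ⁻¹' V, (optSpace_nhd_some hΛ _ _).2 rfl,
      (continuous_iff_nhd (F l).1).1 (F l).2 x V hV, ?_⟩
    rintro ⟨_, x'⟩ ⟨rfl, hx'⟩
    exact hx'

end FunctionSpace

/-- A closure operator `σ` on `Y^X` is proper iff continuous convergence of a net implies
its convergence in `(Y^X, σ)`; and it is admissible iff convergence of a net in
`(Y^X, σ)` implies its continuous convergence. -/
theorem proper_admissible_iff_convergence (u : CechClosure X) (v : CechClosure Y)
    (σ : CechClosure (ContMap u v)) :
    (Proper u v σ ↔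
      ∀ (Λ : Type u) (leΛ : Λ → Λ → Prop), IsDirectedOrder leΛ →
        ∀ (F : Λ → ContMap u v) (f : ContMap u v),
          ContConv u v leΛ F f → NetConv σ leΛ F f) ∧
    (Admissible u v σ ↔
      ∀ (Λ : Type u) (leΛ : Λ → Λ → Prop), IsDirectedOrder leΛ →
        ∀ (F : Λ → ContMap u v) (f : ContMap u v),
          NetConv σ leΛ F f → ContConv u v leΛ F f) := by
  refine ⟨⟨fun hP Λ le hΛ F f hF => ?_, fun hC Z w G hG => ?_⟩,
    ⟨fun hA Λ le hΛ F f hF => ?_, fun hC Z w G hG => ?_⟩⟩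
  · exact (continuous_optSpace_elim_iff hΛ).1 (hP _ _ _ (hF.continuous_optSpace_prod hΛ))
  · exact continuous_of_forall_netConv fun Λ le hΛ s z hs =>
      hC Λ le hΛ _ _ (contConv_of_continuous_uncurry hG hs)
  · exact contConv_of_continuous_uncurry (G := fun z : Option Λ => z.elim f F)
      (hA _ _ _ ((continuous_optSpace_elim_iff hΛ).2 hF)) (netConv_some_none hΛ)
  · refine continuous_of_forall_netConv fun Λ le hΛ p q hp =>
      NetConv.diag hΛ (t := fun i => (G (p i.1).1).1 (p i.2).2) ?_
    exact hC Λ le hΛ _ _ (hG.netConv ((continuous_prod_fst w u).netConv hp)) Λ le hΛ _ _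
      ((continuous_prod_snd w u).netConv hp)

end CechClosure
end
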